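/- arXiv:1612.07616 — 8 statements merged into one kernel-verified Lean document; each statement's English description precedes it below -/
import Mathlib

section
/- For any n ≥ 1 and any r with 1 ≤ r ≤ n, there exists a unitary operator U ∈ U(ℂ^n ⊗ ℂ^n) with operator Schmidt rank Ω(U) = r. -/
open Matrix Kronecker

/-- The realignment (reshuffling) of a bipartite operator. -/
def realign {n m : ℕ} (X : Matrix (Fin n × Fin m) (Fin n × Fin m) ℂ) :
    Matrix (Fin n × Fin n) (Fin m × Fin m) ℂ :=
  Matrix.of fun p q => X (p.1, q.1) (p.2, q.2)

/-- The operator Schmidt rank of a bipartite operator, i.e. the rank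
of its realignment. -/
noncomputable def osr {n m : ℕ} (X : Matrix (Fin n × Fin m) (Fin n × Fin m) ℂ) : ℕ :=
  (realign X).rank

/-- For any rank `1 ≤ r ≤ n` there is a bipartite unitary on `ℂ^n ⊗ ℂ^n` with
operator Schmidt rank `r`. -/
theorem stmt1 (n r : ℕ) (hn : 1 ≤ n) (hr1 : 1 ≤ r) (hrn : r ≤ n) :
    ∃ U ∈ Matrix.unitaryGroup (Fin n × Fin n) ℂ, osr U = r := by
  have hn0 : (n : ℕ) ≠ 0 := by omega
  set ζ : ℂ := Complex.exp (2 * Real.pi * Complex.I / n) with hζdef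
  have hζ : IsPrimitiveRoot ζ n := Complex.isPrimitiveRoot_exp n hn0
  -- star ζ * ζ = 1
  have hζs : star ζ * ζ = 1 := by
    have hconj : (starRingEnd ℂ) (2 * Real.pi * Complex.I / n) =
        -(2 * Real.pi * Complex.I / n) := by
      simp [map_div₀, Complex.conj_I, neg_div, neg_mul, mul_neg, Complex.conj_ofNat]
    show (starRingEnd ℂ) ζ * ζ = 1
    rw [hζdef, ← Complex.exp_conj, hconj, ← Complex.exp_add, neg_add_cancel, Complex.exp_zero]
  -- the diagonal data
  set g : Fin n → ℕ := fun j => min (j : ℕ) (r - 1) with hg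
  have hgr : ∀ j : Fin n, g j < r := fun j => by simp [hg]; omega
  set d : Matrix (Fin n) (Fin n) ℂ := Matrix.of fun j k => ζ ^ (g j * (k : ℕ)) with hd
  set w : Fin n × Fin n → ℂ := fun p => ζ ^ (g p.1 * (p.2 : ℕ)) with hw
  have hws : ∀ p, star (w p) * w p = 1 := by
    intro p
    have : star (w p) * w p = (star ζ * ζ) ^ (g p.1 * (p.2 : ℕ)) := by
      rw [hw]; rw [mul_pow]; rw [← star_pow]
    rw [this, hζs, one_pow]
  refine ⟨Matrix.diagonal w, ?_, ?_⟩
  · rw [Matrix.mem_unitaryGroup_iff]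
    rw [Matrix.star_eq_conjTranspose, Matrix.diagonal_conjTranspose,
      Matrix.diagonal_mul_diagonal]
    have h1 : (fun p => w p * star w p) = fun _ : Fin n × Fin n => (1 : ℂ) :=
      funext fun p => by rw [mul_comm]; exact hws p
    rw [h1]
    exact Matrix.diagonal_one
  · -- osr computation
    -- realign (diagonal w) = E * d * Eᵀ
    set E : Matrix (Fin n × Fin n) (Fin n) ℂ :=
      Matrix.of fun p j => if p.1 = p.2 ∧ j = p.1 then 1 else 0 with hE
    have hinner : ∀ (p : Fin n × Fin n) (k : Fin n),
        (∑ j, E p j * d j k) = if p.1 = p.2 then d p.1 k else 0 := by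
      intro p k
      by_cases h : p.1 = p.2
      · simp [hE, h, ite_mul, Finset.sum_ite_eq']
      · simp [hE, h]
    have hre : realign (Matrix.diagonal w) = E * d * Eᵀ := by
      ext p q
      show (Matrix.diagonal w) (p.1, q.1) (p.2, q.2) = (E * d * Eᵀ) p q
      rw [Matrix.mul_apply]
      simp only [Matrix.mul_apply]
      have : ∀ k, (∑ j, E p j * d j k) * Eᵀ k q =
          (if p.1 = p.2 then d p.1 k else 0) * (if q.1 = q.2 ∧ k = q.1 then 1 else 0) := by
        intro k
        rw [hinner]
        rfl
      rw [Finset.sum_congr rfl fun k _ => this k, Matrix.diagonal_apply]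
      by_cases hp : p.1 = p.2
      · by_cases hq : q.1 = q.2
        · rw [if_pos (show (p.1, q.1) = (p.2, q.2) by rw [hp, hq])]
          simp only [hp, hq, if_true, true_and, mul_ite, mul_one, mul_zero,
            Finset.sum_ite_eq', Finset.mem_univ]
          rfl
        · rw [if_neg (fun hc : (p.1, q.1) = (p.2, q.2) => hq (congrArg Prod.snd hc))]
          simp [hq]
      · rw [if_neg (fun hc : (p.1, q.1) = (p.2, q.2) => hp (congrArg Prod.fst hc))]
        simp [hp]
    have hEE : Eᵀ * E = 1 := by
      ext j k
      rw [Matrix.mul_apply]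
      simp only [Matrix.transpose_apply, hE, Matrix.of_apply]
      rw [Fintype.sum_prod_type]
      by_cases hjk : j = k
      · subst hjk
        rw [Matrix.one_apply_eq]
        rw [Finset.sum_eq_single j]
        · rw [Finset.sum_eq_single j]
          · simp
          · intro b _ hb
            rw [if_neg fun hc => hb hc.1.symm, zero_mul]
          · intro h; exact absurd (Finset.mem_univ _) h
        · intro a _ ha
          refine Finset.sum_eq_zero fun b _ => ?_
          rcases Decidable.em ((a, b).1 = (a, b).2 ∧ j = (a, b).1) with h | h
          · exact absurd h.2.symm ha
          · rw [if_neg h, zero_mul]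
        · intro h; exact absurd (Finset.mem_univ _) h
      · rw [Matrix.one_apply_ne hjk]
        refine Finset.sum_eq_zero fun a _ => Finset.sum_eq_zero fun b _ => ?_
        rcases Decidable.em ((a, b).1 = (a, b).2 ∧ j = (a, b).1) with h | h
        · rw [if_pos h, one_mul, if_neg]
          rintro ⟨h1, h2⟩
          exact hjk (h.2.trans h2.symm)
        · rw [if_neg h, zero_mul]
    -- rank (E d Eᵀ) = rank d
    have hrank1 : (E * d * Eᵀ).rank = d.rank := by
      refine le_antisymm ?_ ?_
      · calc (E * d * Eᵀ).rank ≤ (E * d).rank := Matrix.rank_mul_le_left _ _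
          _ ≤ d.rank := Matrix.rank_mul_le_right _ _
      · have heq : Eᵀ * (E * d * Eᵀ) * E = d := by
          rw [show Eᵀ * (E * d * Eᵀ) * E = Eᵀ * E * d * (Eᵀ * E) from by
            simp only [Matrix.mul_assoc], hEE, one_mul, mul_one]
        calc d.rank = (Eᵀ * (E * d * Eᵀ) * E).rank := by rw [heq]
          _ ≤ (Eᵀ * (E * d * Eᵀ)).rank := Matrix.rank_mul_le_left _ _
          _ ≤ (E * d * Eᵀ).rank := Matrix.rank_mul_le_right _ _
    -- rank d = r
    have hrankd : d.rank = r := by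
      refine le_antisymm ?_ ?_
      · -- d = A * B with inner dimension r
        set A : Matrix (Fin n) (Fin r) ℂ :=
          Matrix.of fun j m => if (m : ℕ) = g j then 1 else 0 with hA
        set B : Matrix (Fin r) (Fin n) ℂ :=
          Matrix.of fun m k => ζ ^ ((m : ℕ) * (k : ℕ)) with hB
        have hdAB : d = A * B := by
          ext j k
          simp only [Matrix.mul_apply, hA, hB, Matrix.of_apply, hd]
          rw [Finset.sum_eq_single (⟨g j, hgr j⟩ : Fin r)]
          · simp
          · intro m _ hm
            rw [if_neg, zero_mul]
            intro hc
            exact hm (Fin.ext hc)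
          · intro h; exact absurd (Finset.mem_univ _) h
        calc d.rank = (A * B).rank := by rw [hdAB]
          _ ≤ B.rank := Matrix.rank_mul_le_right _ _
          _ ≤ Fintype.card (Fin r) := B.rank_le_card_height
          _ = r := Fintype.card_fin r
      · -- the top-left r×r submatrix is an invertible Vandermonde matrix
        set f : Fin r → Fin n := Fin.castLE hrn with hf
        have hsub : d.submatrix f f = Matrix.vandermonde (fun m : Fin r => ζ ^ (m : ℕ)) := by
          ext j k
          simp only [Matrix.submatrix_apply, hd, Matrix.of_apply, Matrix.vandermonde_apply, hf]
          rw [← pow_mul]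
          congr 1
          simp only [hg, Fin.coe_castLE]
          have : (j : ℕ) ≤ r - 1 := by omega
          rw [min_eq_left this]
        have hdet : (d.submatrix f f).det ≠ 0 := by
          rw [hsub, Matrix.det_vandermonde]
          refine Finset.prod_ne_zero_iff.mpr fun i _ => Finset.prod_ne_zero_iff.mpr fun j hj => ?_
          have hij' : (i : ℕ) < (j : ℕ) := Fin.lt_def.mp (Finset.mem_Ioi.mp hj)
          intro hc
          have hzz : ζ ^ (j : ℕ) = ζ ^ (i : ℕ) := sub_eq_zero.mp hc
          have hij : (j : ℕ) = (i : ℕ) :=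
            hζ.pow_inj (lt_of_lt_of_le j.isLt hrn) (lt_of_lt_of_le i.isLt hrn) hzz
          omega
        have hrk : (d.submatrix f f).rank = r := by
          rw [Matrix.rank_of_isUnit _ ((Matrix.isUnit_iff_isUnit_det _).mpr hdet.isUnit),
            Fintype.card_fin]
        -- submatrix as a product P * d * Pᵀ
        set P : Matrix (Fin r) (Fin n) ℂ := Matrix.of fun m j => if j = f m then 1 else 0 with hP
        have hPd : P * d * Pᵀ = d.submatrix f f := by
          ext a b
          simp only [Matrix.mul_apply, Matrix.transpose_apply, hP, Matrix.of_apply,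
            ite_mul, one_mul, zero_mul, mul_ite, mul_one, mul_zero, Finset.sum_ite_eq',
            Finset.mem_univ, if_true, Matrix.submatrix_apply]
        calc r = (d.submatrix f f).rank := hrk.symm
          _ = (P * d * Pᵀ).rank := by rw [hPd]
          _ ≤ (P * d).rank := Matrix.rank_mul_le_left _ _
          _ ≤ d.rank := Matrix.rank_mul_le_right _ _
    rw [osr, hre, hrank1, hrankd]
end

section
/- For any tuples of permutations α, β ∈ (S_n)^n (each an n-tuple of permutations of {0,...,n-1}), the operator U_{α,β} = Σ_{i,j=0}^{n-1} e_i e_j^* ⊗ e_{α_i(j)} e_{β_j(i)}^* on ℂ^n ⊗ ℂ^n is unitary. -/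
/-!
`U_{α,β}` sends the basis vector `e_j ⊗ e_{β_j(i)}` to `e_i ⊗ e_{α_i(j)}`. As `(i, j)` ranges over all
pairs, both `(j, β_j(i))` and `(i, α_i(j))` range over all pairs exactly once, so `U_{α,β}` is a
permutation matrix, hence unitary.
-/

open Matrix Kronecker

/-- The bipartite unitary associated to two tuples of permutations:
`U_{α,β} = Σ_{i,j} e_i e_j^* ⊗ e_{α_i(j)} e_{β_j(i)}^*`. -/
def permU {n : ℕ} (α β : Fin n → Equiv.Perm (Fin n)) :
    Matrix (Fin n × Fin n) (Fin n × Fin n) ℂ :=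
  Matrix.of fun p q => if p.2 = α p.1 q.1 ∧ q.2 = β q.1 p.1 then 1 else 0

/-- `N(α,β) = |{(α_i(j), β_j(i)) : 0 ≤ i,j ≤ n-1}|`. -/
def Npairs {n : ℕ} (α β : Fin n → Equiv.Perm (Fin n)) : ℕ :=
  (Finset.image (fun ij : Fin n × Fin n => ((α ij.1) ij.2, (β ij.2) ij.1))
    Finset.univ).card

theorem Matrix.permMatrix_mem_unitaryGroup {m R : Type*} [Fintype m] [DecidableEq m]
    [CommRing R] [StarRing R] (σ : Equiv.Perm m) :
    σ.permMatrix R ∈ unitaryGroup m R := by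
  rw [mem_unitaryGroup_iff', star_eq_conjTranspose, conjTranspose_permMatrix, ← permMatrix_mul,
    mul_inv_cancel, permMatrix_one]

/-- `(i, a) ↦ (j, β_j(i))` where `j = α_i⁻¹(a)`. -/
def permUPerm {n : ℕ} (α β : Fin n → Equiv.Perm (Fin n)) : Equiv.Perm (Fin n × Fin n) :=
  ((Equiv.prodShear (Equiv.refl _) fun i => (α i)⁻¹).trans (Equiv.prodComm _ _)).trans
    (Equiv.prodShear (Equiv.refl _) β)

theorem permU_eq_permMatrix {n : ℕ} (α β : Fin n → Equiv.Perm (Fin n)) :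
    permU α β = (permUPerm α β).permMatrix ℂ := by
  ext ⟨i, a⟩ ⟨j, b⟩
  simp only [permU, of_apply, PEquiv.toMatrix_apply, Equiv.toPEquiv_apply, Option.mem_def,
    Option.some_inj, permUPerm, Equiv.trans_apply, Equiv.prodShear_apply, Equiv.prodComm_apply,
    Equiv.refl_apply, Prod.swap_prod_mk, Prod.mk.injEq, Equiv.Perm.inv_eq_iff_eq]
  congr 1
  rw [eq_iff_iff]
  constructor <;> rintro ⟨rfl, rfl⟩ <;> simp

/-- The operator `U_{α,β}` is unitary. -/
theorem stmt4 {n : ℕ} (α β : Fin n → Equiv.Perm (Fin n)) :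
    permU α β ∈ Matrix.unitaryGroup (Fin n × Fin n) ℂ := by
  rw [permU_eq_permMatrix]
  exact permMatrix_mem_unitaryGroup _
end

section
/- For any tuples of permutations α, β ∈ (S_n)^n, the operator Schmidt rank of U_{α,β} = Σ_{i,j=0}^{n-1} e_i e_j^* ⊗ e_{α_i(j)} e_{β_j(i)}^* equals the cardinality N(α,β) = |{(α_i(j), β_j(i)) : 0 ≤ i,j ≤ n-1}|. -/
open Matrix Kronecker

/-!
The block `(U_{α,β})_{ij}` is the matrix unit `e_{α_i(j)} e_{β_j(i)}^*`, so after realignment every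
row of `U_{α,β}` is a standard basis vector, indexed by the pair `(α_i(j), β_j(i))`. The span of
the rows is therefore spanned by the distinct basis vectors among them, and its dimension is the
number `N(α,β)` of distinct pairs.
-/

theorem Matrix.rank_of_rows_eq_single {m n K : Type*} [Fintype m] [Fintype n] [DecidableEq n]
    [Field K] (f : m → n) :
    (Matrix.of fun i => (Pi.single (f i) (1 : K) : n → K)).rank =
      (Finset.univ.image f).card := by
  classical
  have hrows : Set.range (Matrix.of fun i => (Pi.single (f i) (1 : K) : n → K)).row =
      Pi.basisFun K n '' (Finset.univ.image f : Set n) := by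
    rw [Finset.coe_image, Finset.coe_univ, Set.image_univ, ← Set.range_comp]
    simp only [Function.comp_def, Pi.basisFun_apply]
    rfl
  rw [rank_eq_finrank_span_row, hrows, ← Finset.coe_image, finrank_span_finset_eq_card,
    Finset.card_image_of_injective _ (Pi.basisFun K n).injective]
  rw [Finset.coe_image]
  exact ((Pi.basisFun K n).linearIndependent.linearIndepOn _).id_image

theorem realign_permU {n : ℕ} (α β : Fin n → Equiv.Perm (Fin n)) :
    realign (permU α β) = Matrix.of fun p => Pi.single (α p.1 p.2, β p.2 p.1) 1 := by
  ext p q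
  simp only [realign, permU, Matrix.of_apply, Pi.single_apply, Prod.ext_iff]

/-- The operator Schmidt rank of `U_{α,β}` equals `N(α,β)`. -/
theorem stmt5 {n : ℕ} (α β : Fin n → Equiv.Perm (Fin n)) :
    osr (permU α β) = Npairs α β := by
  rw [osr, realign_permU, Matrix.rank_of_rows_eq_single]
  rfl
end

section
/- Let n ∈ ℕ and π ∈ S_n with exactly l fixed points. Define tuples α, β ∈ (S_n)^n by α_0 = π, α_i = c^i for 1 ≤ i ≤ n-1, and β_j = c^j for 0 ≤ j ≤ n-1, where c is the cyclic shift c(i) = i+1 mod n. Then N(α,β) := |{(α_i(j), β_j(i)) : 0 ≤ i,j ≤ n-1}| = 2n - l. -/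
open Matrix Kronecker

open Finset

section GraphUnionDiag

variable {α : Type*} [Fintype α] [DecidableEq α] (π : Equiv.Perm α)

lemma image_graph_inter_diag :
    univ.image (fun a => (π a, a)) ∩ univ.diag = ({a | π a = a} : Finset α).diag := by
  ext ⟨a, b⟩
  simp only [mem_inter, mem_image, mem_univ, true_and, mem_diag, mem_filter, Prod.mk.injEq]
  grind

lemma card_image_graph_union_diag :
    #(univ.image (fun a => (π a, a)) ∪ univ.diag) = 2 * Fintype.card α - #{a | π a = a} := by
  have h_graph : #(univ.image fun a => (π a, a)) = Fintype.card α :=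
    card_image_of_injective _ fun a b h => (Prod.mk.inj h).2
  have h_fix : #({a | π a = a} : Finset α) ≤ Fintype.card α := card_filter_le _ _
  have := card_union_add_card_inter (univ.image fun a => (π a, a)) univ.diag
  rw [image_graph_inter_diag, diag_card, diag_card, h_graph, card_univ] at this
  omega

end GraphUnionDiag

lemma finRotate_pow_val_apply {n : ℕ} (k i : Fin n) : (finRotate n ^ (k : ℕ)) i = i + k := by
  rw [Equiv.Perm.coe_pow, ← finCycle_eq_finRotate_iterate, finCycle_apply]

lemma image_pairs_eq_graph_union_diag {n : ℕ} (π : Equiv.Perm (Fin n)) :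
    univ.image (fun ij : Fin n × Fin n =>
      ((if ij.1.val = 0 then π else finRotate n ^ ij.1.val) ij.2, (finRotate n ^ ij.2.val) ij.1))
      = univ.image (fun j => (π j, j)) ∪ univ.diag := by
  ext ⟨a, b⟩
  simp only [mem_union, mem_image, mem_univ, true_and, mem_diag, Prod.exists, Prod.mk.injEq,
    finRotate_pow_val_apply]
  constructor
  · rintro ⟨i, j, h_fst, rfl⟩
    split_ifs at h_fst with hi
    · exact Or.inl ⟨j, h_fst, Fin.ext (by simp [Fin.val_add, hi, Nat.mod_eq_of_lt j.isLt])⟩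
    · rw [finRotate_pow_val_apply] at h_fst
      exact Or.inr (h_fst ▸ add_comm j i)
  · have := a.neZero
    rintro (⟨j, rfl, rfl⟩ | rfl)
    · exact ⟨0, j, by simp⟩
    by_cases h_fixed : π a = a
    · exact ⟨0, a, by simp [h_fixed]⟩
    obtain ⟨i, hi⟩ : ∃ i : Fin n, i.val ≠ 0 := by
      by_contra! h
      exact h_fixed (Fin.ext ((h _).trans (h _).symm))
    exact ⟨i, a - i, by simp [hi, finRotate_pow_val_apply]⟩

/-- With `α_0 = π`, `α_i = c^i` for `i ≠ 0`, and `β_j = c^j` (where `c` is the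
cyclic shift by one and `π` has exactly `l` fixed points), `N(α,β) = 2n - l`. -/
theorem stmt6 {n : ℕ} (π : Equiv.Perm (Fin n)) (l : ℕ)
    (hl : (Finset.univ.filter fun i : Fin n => π i = i).card = l) :
    Npairs (fun i : Fin n => if i.val = 0 then π else (finRotate n) ^ i.val)
           (fun j : Fin n => (finRotate n) ^ j.val) = 2 * n - l := by
  rw [Npairs, image_pairs_eq_graph_union_diag, card_image_graph_union_diag, Fintype.card_fin, hl]
end

section
/- For every n ∈ ℕ and every r ∈ {n, n+2, n+3, ..., 2n} (i.e., r ∈ {n,...,2n} with r ≠ n+1), there exist tuples α, β ∈ (S_n)^n such that N(α,β) = |{(α_i(j), β_j(i)) : 0 ≤ i,j ≤ n-1}| = r. -/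
open Matrix Kronecker

/-- There is a permutation of `Fin (m+1)` moving exactly `k` points,
for any `k ≤ m+1` with `k ≠ 1`. -/
lemma exists_perm_card_moved (m k : ℕ) (hk : k ≤ m + 1) (hk1 : k ≠ 1) :
    ∃ π : Equiv.Perm (Fin (m + 1)),
      (Finset.univ.filter fun x => π x ≠ x).card = k := by
  rcases Nat.eq_zero_or_pos k with rfl | hpos
  · exact ⟨1, by simp⟩
  · have hk2 : 2 ≤ k := by omega
    set i : Fin (m + 1) := ⟨k - 1, by omega⟩ with hi
    refine ⟨Fin.cycleRange i, ?_⟩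
    have key : ∀ x : Fin (m + 1), (Fin.cycleRange i x ≠ x) ↔ x ≤ i := by
      intro x
      rcases lt_trichotomy x i with h | h | h
      · rw [Fin.cycleRange_of_lt h]
        constructor
        · intro _; exact h.le
        · intro _ hc
          have hxl : x < Fin.last m := lt_of_lt_of_le h (Fin.le_last i)
          have hv : ((x + 1 : Fin (m + 1)) : ℕ) = (x : ℕ) + 1 :=
            Fin.val_add_one_of_lt hxl
          have : ((x + 1 : Fin (m + 1)) : ℕ) = (x : ℕ) := by rw [hc]
          omega
      · subst h
        rw [Fin.cycleRange_self]
        constructor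
        · intro _; exact le_refl _
        · intro _ hc
          have hv := congrArg Fin.val hc
          simp [hi] at hv
          omega
      · rw [Fin.cycleRange_of_gt h]
        simp [not_le.mpr h]
    have hset : (Finset.univ.filter fun x => Fin.cycleRange i x ≠ x) = Finset.Iic i := by
      ext x
      simp [key x]
    rw [hset, Fin.card_Iic]
    simp [hi]
    omega

/-- For every `n` and every `r` in `{n,...,2n}` with `r ≠ n+1` there are tuples
of permutations with `N(α,β) = r`. -/
theorem stmt7 (n r : ℕ) (h1 : n ≤ r) (h2 : r ≤ 2 * n) (h3 : r ≠ n + 1) :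
    ∃ α β : Fin n → Equiv.Perm (Fin n), Npairs α β = r := by
  match n with
  | 0 =>
    have : r = 0 := by omega
    subst this
    exact ⟨fun _ => 1, fun _ => 1, by simp [Npairs]⟩
  | 1 =>
    have : r = 1 := by omega
    subst this
    exact ⟨fun _ => 1, fun _ => 1, by decide⟩
  | (m + 2) =>
    set N := m + 2 with hN
    obtain ⟨π, hπ⟩ := exists_perm_card_moved (m + 1) (r - N) (by omega) (by omega)
    set α : Fin N → Equiv.Perm (Fin N) :=
      fun i => if i = 0 then π else Equiv.addLeft i with hα
    set β : Fin N → Equiv.Perm (Fin N) := fun j => Equiv.addLeft j with hβ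
    refine ⟨α, β, ?_⟩
    set A : Finset (Fin N × Fin N) := Finset.univ.image (fun x => (x, x)) with hA
    set B : Finset (Fin N × Fin N) := Finset.univ.image (fun j => (π j, j)) with hB
    have himg :
        (Finset.image (fun ij : Fin N × Fin N => ((α ij.1) ij.2, (β ij.2) ij.1))
          Finset.univ) = A ∪ B := by
      ext p
      simp only [Finset.mem_image, Finset.mem_union, Finset.mem_univ, true_and, hA, hB]
      constructor
      · rintro ⟨⟨i, j⟩, rfl⟩
        by_cases hi : i = 0
        · subst hi
          right
          exact ⟨j, by simp [hα, hβ]⟩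
        · left
          refine ⟨i + j, ?_⟩
          simp [hα, hβ, hi, add_comm]
      · rintro (⟨x, rfl⟩ | ⟨j, rfl⟩)
        · refine ⟨(1, x - 1), ?_⟩
          have h1 : (1 : Fin N) ≠ 0 := one_ne_zero
          simp only [hα, hβ, if_neg h1, Equiv.coe_addLeft]
          refine Prod.ext ?_ ?_
          · rw [add_comm]; exact sub_add_cancel x 1
          · exact sub_add_cancel x 1
        · exact ⟨(0, j), by simp [hα, hβ]⟩
    have hAcard : A.card = N := by
      rw [hA, Finset.card_image_of_injective _ (fun a b h => congrArg Prod.fst h)]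
      simp
    have hdiff : B \ A = Finset.image (fun j => (π j, j))
        (Finset.univ.filter fun j => π j ≠ j) := by
      ext p
      simp only [hA, hB, Finset.mem_sdiff, Finset.mem_image, Finset.mem_univ, true_and,
        Finset.mem_filter, not_exists]
      constructor
      · rintro ⟨⟨j, rfl⟩, hnot⟩
        exact ⟨j, fun hfix => hnot j (by rw [hfix]), rfl⟩
      · rintro ⟨j, hj, rfl⟩
        refine ⟨⟨j, rfl⟩, ?_⟩
        intro x hx
        apply hj
        have h1 : x = π j := congrArg Prod.fst hx
        have h2 : x = j := congrArg Prod.snd hx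
        rw [← h1, h2]
    have hdiffcard : (B \ A).card = r - N := by
      rw [hdiff, Finset.card_image_of_injective _ (fun a b h => congrArg Prod.snd h)]
      exact hπ
    have hunion : (A ∪ B).card = N + (r - N) := by
      rw [← Finset.union_sdiff_self_eq_union,
        Finset.card_union_of_disjoint Finset.disjoint_sdiff, hAcard, hdiffcard]
    rw [Npairs, himg, hunion]
    omega
end

section
/- For every n > 3 and every r ∈ {2n, 2n+1, ..., 3n-1}, there exist tuples α, β ∈ (S_n)^n with N(α,β) = |{(α_i(j), β_j(i)) : 0 ≤ i,j ≤ n-1}| = r. -/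
open Matrix Kronecker

/-!
Take `α_i = c^{e(i)}` with `e(0) = 1` and `e(i) = i` otherwise, `β_j = c^j` for `j ≠ 0` and
`β_0 = π`. The pairs with `i, j ≠ 0` are `(i + j, i + j)` and fill the diagonal (this needs
`n ≥ 3`), and those with `i = 0`, `j ≠ 0` are the `n - 1` points `(y + 1, y)`, `y ≠ 0`. The
remaining pairs `(e(i), π i)` have distinct second coordinates, so
`N(α, β) = 2n - 1 + #{i | (e(i), π i) is off this staircase}`. For `π` the cycle
`0 ↦ 1 ↦ ⋯ ↦ s ↦ 0` exactly the rows `1, …, s` are off the staircase, which gives every value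
`2n - 1 + s` with `0 < s < n`; for `π = c²` all rows are off it once `n ≥ 4`, which gives `3n - 1`.
-/

theorem Fin.ofNat_ne_zero_of_lt {n k : ℕ} [NeZero n] [k.AtLeastTwo] (h : k < n) :
    (ofNat(k) : Fin n) ≠ 0 := by
  rw [Ne, Fin.ext_iff, Fin.val_zero]
  exact fun h' => NeZero.ne k ((Nat.mod_eq_of_lt h).symm.trans h')

namespace ShiftTuples

open Finset Fin.CommRing

variable {n : ℕ} [NeZero n]

def alphaShift (i : Fin n) : Fin n := if i = 0 then 1 else i

def alpha (i : Fin n) : Equiv.Perm (Fin n) := Equiv.addLeft (alphaShift i)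

def beta (π : Equiv.Perm (Fin n)) (j : Fin n) : Equiv.Perm (Fin n) :=
  if j = 0 then π else Equiv.addLeft j

def staircase (n : ℕ) [NeZero n] : Finset (Fin n × Fin n) :=
  univ.diag ∪ (univ.erase 0).image fun y => (y + 1, y)

def column (π : Equiv.Perm (Fin n)) : Finset (Fin n × Fin n) :=
  univ.image fun i => (alphaShift i, π i)

def offStaircase (π : Equiv.Perm (Fin n)) : Finset (Fin n) :=
  {i | (alphaShift i, π i) ∉ staircase n}

theorem mem_staircase {x y : Fin n} :
    (x, y) ∈ staircase n ↔ x = y ∨ (x = y + 1 ∧ y ≠ 0) := by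
  simp [staircase, and_comm, eq_comm]

theorem card_staircase (hn : 2 ≤ n) : #(staircase n) = 2 * n - 1 := by
  have : Nontrivial (Fin n) := Fin.nontrivial_iff_two_le.mpr hn
  have hdisj : Disjoint (univ.diag : Finset (Fin n × Fin n))
      ((univ.erase 0).image fun y => (y + 1, y)) := by
    simp only [disjoint_left, mem_diag, mem_image, mem_erase, mem_univ, true_and, not_exists,
      not_and]
    rintro ⟨x, y⟩ hxy z - ⟨rfl, rfl⟩
    exact one_ne_zero (add_eq_left.mp hxy)
  rw [staircase, card_union_of_disjoint hdisj, diag_card,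
    card_image_of_injective _ fun _ _ h => (Prod.ext_iff.mp h).2, card_erase_of_mem (mem_univ _)]
  simp only [card_univ, Fintype.card_fin]
  omega

theorem exists_ne_zero_sub_ne_zero (hn : 3 ≤ n) (v : Fin n) : ∃ i, i ≠ 0 ∧ v - i ≠ 0 := by
  have : Nontrivial (Fin n) := Fin.nontrivial_iff_two_le.mpr (by omega)
  have h1 : (1 : Fin n) ≠ 0 := one_ne_zero
  have h2 : (2 : Fin n) ≠ 0 := Fin.ofNat_ne_zero_of_lt hn
  by_cases hv : v = 1
  · refine ⟨2, h2, fun h => h1 ?_⟩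
    linear_combination hv - h
  · exact ⟨1, h1, sub_ne_zero.mpr hv⟩

theorem alpha_apply (i j : Fin n) : alpha i j = alphaShift i + j := rfl

theorem beta_apply (π : Equiv.Perm (Fin n)) (j i : Fin n) :
    beta π j i = if j = 0 then π i else j + i := by
  unfold beta; split_ifs <;> rfl

theorem image_alpha_beta (hn : 3 ≤ n) (π : Equiv.Perm (Fin n)) :
    univ.image (fun ij : Fin n × Fin n => (alpha ij.1 ij.2, beta π ij.2 ij.1))
      = staircase n ∪ column π := by
  ext ⟨x, y⟩
  simp only [mem_image, mem_univ, true_and, Prod.exists, mem_union, mem_staircase, column,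
    alpha_apply, beta_apply, Prod.mk.injEq]
  constructor
  · rintro ⟨i, j, rfl, rfl⟩
    by_cases hj : j = 0
    · subst hj
      exact Or.inr ⟨i, by simp⟩
    by_cases hi : i = 0
    · subst hi
      simp [alphaShift, hj, add_comm]
    · simp [alphaShift, hi, hj, add_comm]
  · rintro ((rfl | ⟨rfl, hy⟩) | ⟨i, rfl, rfl⟩)
    · obtain ⟨i, hi, hxi⟩ := exists_ne_zero_sub_ne_zero hn x
      exact ⟨i, x - i, by simp [alphaShift, hi, hxi]⟩
    · exact ⟨0, y, by simp [alphaShift, hy, add_comm]⟩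
    · exact ⟨i, 0, by simp⟩

theorem card_staircase_union_column (π : Equiv.Perm (Fin n)) :
    #(staircase n ∪ column π) = #(staircase n) + #(offStaircase π) := by
  rw [union_comm, ← card_sdiff_add_card, add_comm, sdiff_eq_filter, column, filter_image,
    card_image_of_injective _ fun _ _ h => π.injective (Prod.ext_iff.mp h).2]
  rfl

theorem npairs_alpha_beta (hn : 3 ≤ n) (π : Equiv.Perm (Fin n)) :
    Npairs alpha (beta π) = 2 * n - 1 + #(offStaircase π) := by
  rw [Npairs, image_alpha_beta hn, card_staircase_union_column, card_staircase (by omega)]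

theorem offStaircase_cycleRange (hn : 3 ≤ n) {s : Fin n} (hs : s ≠ 0) :
    offStaircase (Fin.cycleRange s) = Icc 1 s := by
  have : Nontrivial (Fin n) := Fin.nontrivial_iff_two_le.mpr (by omega)
  have h2 : (2 : Fin n) ≠ 0 := Fin.ofNat_ne_zero_of_lt hn
  ext i
  simp only [offStaircase, mem_filter, mem_univ, true_and, mem_Icc, mem_staircase]
  rcases lt_trichotomy i s with his | rfl | hsi
  · rw [Fin.cycleRange_of_lt his]
    by_cases hi : i = 0
    · subst hi
      simp [alphaShift]
    · have : i ≠ i + 1 + 1 := fun h => h2 (by linear_combination -h)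
      simp [alphaShift, hi, his.le, Fin.one_le_of_ne_zero hi, this]
  · simp [alphaShift, hs, Fin.one_le_of_ne_zero hs]
  · rw [Fin.cycleRange_of_gt hsi]
    have hi : i ≠ 0 := (lt_of_le_of_lt (Fin.zero_le s) hsi).ne'
    simp [alphaShift, hi, hsi.not_ge]

theorem offStaircase_addLeft_two (hn : 4 ≤ n) :
    offStaircase (Equiv.addLeft (2 : Fin n)) = univ := by
  have h2 : (2 : Fin n) ≠ 0 := Fin.ofNat_ne_zero_of_lt (by omega : 2 < n)
  have h3 : (3 : Fin n) ≠ 0 := Fin.ofNat_ne_zero_of_lt hn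
  ext i
  simp only [offStaircase, mem_filter, mem_univ, true_and, mem_staircase, Equiv.coe_addLeft,
    iff_true]
  by_cases hi : i = 0
  · subst hi
    simp only [alphaShift, if_pos, add_zero]
    rintro (h | ⟨h, -⟩)
    · exact h2 (by linear_combination -2 * h)
    · exact h2 (by linear_combination -h)
  · simp only [alphaShift, hi, if_false]
    rintro (h | ⟨h, -⟩)
    · exact h2 (by linear_combination -h)
    · exact h3 (by linear_combination -h)

theorem card_offStaircase_cycleRange (hn : 3 ≤ n) {s : Fin n} (hs : s ≠ 0) :
    #(offStaircase (Fin.cycleRange s)) = s := by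
  rw [offStaircase_cycleRange hn hs, Fin.card_Icc, Fin.val_one', Nat.mod_eq_of_lt (by omega)]
  omega

end ShiftTuples

/-- For `n > 3` and every `r` in `{2n,...,3n-1}` there are tuples of
permutations with `N(α,β) = r`. -/
theorem stmt8 (n r : ℕ) (hn : 3 < n) (h1 : 2 * n ≤ r) (h2 : r ≤ 3 * n - 1) :
    ∃ α β : Fin n → Equiv.Perm (Fin n), Npairs α β = r := by
  have : NeZero n := ⟨by omega⟩
  obtain ⟨k, hk0, hkn, rfl⟩ : ∃ k, 0 < k ∧ k ≤ n ∧ r = 2 * n - 1 + k :=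
    ⟨r - (2 * n - 1), by omega, by omega, by omega⟩
  rcases hkn.lt_or_eq with hk | rfl
  · refine ⟨ShiftTuples.alpha, ShiftTuples.beta (Fin.cycleRange ⟨k, hk⟩), ?_⟩
    rw [ShiftTuples.npairs_alpha_beta hn.le,
      ShiftTuples.card_offStaircase_cycleRange hn.le ((Fin.pos_iff_ne_zero' _).mp hk0)]
  · refine ⟨ShiftTuples.alpha, ShiftTuples.beta (Equiv.addLeft 2), ?_⟩
    rw [ShiftTuples.npairs_alpha_beta hn.le, ShiftTuples.offStaircase_addLeft_two hn,
      Finset.card_univ, Fintype.card_fin]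
end

section
/- For every even n > 2, there exists a unitary U ∈ U(ℂ^n ⊗ ℂ^n) with operator Schmidt rank Ω(U) = n + 1. -/
open Matrix Kronecker

/-!
Write a bipartite operator as an `n × n` matrix of `n × n` blocks; its operator Schmidt rank is
the dimension of the span of the blocks. Take
`U = (∑ₐ |a⟩⟨a| ⊗ Vₐ) (W ⊗ 1) (∑_c |c⟩⟨c| ⊗ V'_c)`, a product of unitaries whose `(a, c)` block is
`W a c • Vₐ V'_c`. Let `W` be the reflection in `(3 e₀ + 4 e₁) / 5`, which mixes only `e₀` and `e₁`,
let `S` be the cyclic shift, and put `V₀ = 1`, `V₁ = S⋆`, `V_j = 1 - 2 E_jj` for `j ≥ 2`, `V'₁ = S`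
and `V'_c = 1` otherwise. The nonzero blocks are then multiples of `1, S, S⋆, 1` and of the `V_j`,
and for `n ≥ 3` the `n + 1` matrices `1, S, S⋆, V₂, …, V_{n-1}` are linearly independent: `S` and
`S⋆` are the only ones with a nonzero `(0, 1)`, resp. `(1, 0)` entry, and the diagonal ones are
separated by their diagonal entries.
-/

open Module Set Submodule

theorem Submodule.span_range_smul_eq_span_image {K M ι : Type*} [DivisionRing K]
    [AddCommGroup M] [Module K M] (w : ι → K) (v : ι → M) :
    span K (range fun i => w i • v i) = span K (v '' {i | w i ≠ 0}) := by
  apply le_antisymm <;> rw [span_le]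
  · rintro _ ⟨i, rfl⟩
    by_cases hi : w i = 0
    · simp [hi]
    · exact smul_mem _ _ (subset_span ⟨i, hi, rfl⟩)
  · rintro _ ⟨i, hi, rfl⟩
    exact (smul_mem_iff _ hi).mp (subset_span ⟨i, rfl⟩)

namespace Matrix

variable {I J R : Type*}

theorem comp_star [Star R] (M : Matrix I I (Matrix J J R)) :
    comp I I J J R (star M) = star (comp I I J J R M) := rfl

theorem comp_mem_unitary [Fintype I] [Fintype J] [DecidableEq I] [DecidableEq J] [Semiring R]
    [StarRing R] {M : Matrix I I (Matrix J J R)} (hM : M ∈ unitary (Matrix I I (Matrix J J R))) :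
    comp I I J J R M ∈ unitary (Matrix (I × J) (I × J) R) := by
  rw [Unitary.mem_iff, ← comp_star, ← compRingEquiv_apply, ← compRingEquiv_apply, ← map_mul,
    ← map_mul, Unitary.star_mul_self_of_mem hM, Unitary.mul_star_self_of_mem hM, map_one]
  exact ⟨rfl, rfl⟩

theorem diagonal_mem_unitary [Fintype I] [DecidableEq I] [Semiring R] [StarRing R] {d : I → R}
    (hd : ∀ i, d i ∈ unitary R) : diagonal d ∈ unitary (Matrix I I R) := by
  rw [Unitary.mem_iff, star_eq_conjTranspose, diagonal_conjTranspose, diagonal_mul_diagonal,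
    diagonal_mul_diagonal, ← diagonal_one]
  exact ⟨congrArg diagonal (funext fun i => Unitary.star_mul_self_of_mem (hd i)),
    congrArg diagonal (funext fun i => Unitary.mul_star_self_of_mem (hd i))⟩

theorem map_algebraMap_mem_unitary [Fintype I] [DecidableEq I] {K A : Type*} [CommSemiring K]
    [StarRing K] [Semiring A] [StarRing A] [Algebra K A] [StarModule K A] {W : Matrix I I K}
    (hW : W ∈ unitary (Matrix I I K)) : W.map (algebraMap K A) ∈ unitary (Matrix I I A) := by
  have hstar : star (W.map (algebraMap K A)) = (star W).map (algebraMap K A) :=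
    (conjTranspose_map _ fun r => algebraMap_star_comm r).symm
  rw [Unitary.mem_iff, hstar, ← Matrix.map_mul, ← Matrix.map_mul, Unitary.star_mul_self_of_mem hW,
    Unitary.mul_star_self_of_mem hW, Matrix.map_one _ (map_zero _) (map_one _)]
  exact ⟨rfl, rfl⟩

theorem permMatrix_mem_unitary [Fintype I] [DecidableEq I] [Semiring R] [StarRing R]
    (σ : Equiv.Perm I) : σ.permMatrix R ∈ unitary (Matrix I I R) := by
  rw [Unitary.mem_iff, star_eq_conjTranspose, conjTranspose_permMatrix, ← permMatrix_mul,
    ← permMatrix_mul, mul_inv_cancel, inv_mul_cancel, permMatrix_one]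
  exact ⟨rfl, rfl⟩

section Householder

variable [DecidableEq I] [CommRing R] [StarRing R]

def householder (u : I → R) : Matrix I I R :=
  1 - (2 : R) • vecMulVec u (star u)

theorem householder_apply (u : I → R) (i j : I) :
    householder u i j = (if i = j then 1 else 0) - 2 * (u i * star (u j)) := by
  simp [householder, one_apply, vecMulVec_apply]

theorem householder_mem_unitary [Fintype I] {u : I → R} (hu : star u ⬝ᵥ u = 1) :
    householder u ∈ unitary (Matrix I I R) := by
  have hproj : vecMulVec u (star u) * vecMulVec u (star u) = vecMulVec u (star u) := by
    rw [vecMulVec_mul_vecMulVec, hu, one_smul]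
  have hstar : star (householder u) = householder u := by
    rw [householder, star_sub, star_one, star_smul, star_eq_conjTranspose,
      conjTranspose_vecMulVec, star_star, star_ofNat]
  have hsq : householder u * householder u = 1 := by
    simp only [householder, sub_mul, mul_sub, one_mul, mul_one, smul_mul_smul_comm, hproj]
    module
  rw [Unitary.mem_iff, hstar]
  exact ⟨hsq, hsq⟩

end Householder

end Matrix

/-- `(∑ₐ |a⟩⟨a| ⊗ V a) (W ⊗ 1) (∑_c |c⟩⟨c| ⊗ V' c)`, built as a matrix of blocks. -/
noncomputable def controlledSandwich {I J : Type*} [Fintype I] [Fintype J] [DecidableEq I]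
    [DecidableEq J] (V : I → Matrix J J ℂ) (W : Matrix I I ℂ) (V' : I → Matrix J J ℂ) :
    Matrix (I × J) (I × J) ℂ :=
  comp I I J J ℂ (diagonal V * W.map (algebraMap ℂ (Matrix J J ℂ)) * diagonal V')

theorem controlledSandwich_mem_unitaryGroup {I J : Type*} [Fintype I] [Fintype J]
    [DecidableEq I] [DecidableEq J] {V V' : I → Matrix J J ℂ} {W : Matrix I I ℂ}
    (hV : ∀ a, V a ∈ unitaryGroup J ℂ) (hW : W ∈ unitaryGroup I ℂ)
    (hV' : ∀ c, V' c ∈ unitaryGroup J ℂ) :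
    controlledSandwich V W V' ∈ unitaryGroup (I × J) ℂ :=
  comp_mem_unitary <| mul_mem (mul_mem (diagonal_mem_unitary hV) (map_algebraMap_mem_unitary hW))
    (diagonal_mem_unitary hV')

theorem osr_comp {n m : ℕ} (B : Matrix (Fin n) (Fin n) (Matrix (Fin m) (Fin m) ℂ)) :
    osr (comp _ _ _ _ ℂ B) = finrank ℂ (span ℂ (range fun p : Fin n × Fin n => B p.1 p.2)) := by
  let vec := (ofLinearEquiv ℂ).symm.trans (LinearEquiv.curry ℂ ℂ (Fin m) (Fin m)).symm
  have hrows : (realign (comp _ _ _ _ ℂ B)).row = vec ∘ fun p => B p.1 p.2 := rfl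
  rw [osr, rank_eq_finrank_span_row, hrows, range_comp, ← LinearEquiv.coe_coe, span_image,
    LinearEquiv.finrank_map_eq]

theorem osr_controlledSandwich {n m : ℕ} (V : Fin n → Matrix (Fin m) (Fin m) ℂ)
    (W : Matrix (Fin n) (Fin n) ℂ) (V' : Fin n → Matrix (Fin m) (Fin m) ℂ) :
    osr (controlledSandwich V W V') = finrank ℂ
      (span ℂ ((fun p : Fin n × Fin n => V p.1 * V' p.2) '' {p | W p.1 p.2 ≠ 0})) := by
  have blocks : (fun p : Fin n × Fin n =>
      (diagonal V * W.map (algebraMap ℂ (Matrix (Fin m) (Fin m) ℂ)) * diagonal V') p.1 p.2) =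
      fun p => W p.1 p.2 • (V p.1 * V' p.2) := by
    funext p
    simp [diagonal_mul, mul_diagonal, Algebra.algebraMap_eq_smul_one]
  rw [controlledSandwich, osr_comp, blocks, span_range_smul_eq_span_image]

namespace SchmidtRankWitness

variable (m : ℕ)

noncomputable def shift : Matrix (Fin (m + 3)) (Fin (m + 3)) ℂ :=
  (finRotate (m + 3)).permMatrix ℂ

noncomputable def mixer : Matrix (Fin (m + 3)) (Fin (m + 3)) ℂ :=
  householder (Pi.single 0 (3 / 5) + Pi.single 1 (4 / 5))

noncomputable def leftBlock (a : Fin (m + 3)) : Matrix (Fin (m + 3)) (Fin (m + 3)) ℂ :=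
  if a = 0 then 1 else if a = 1 then star (shift m) else householder (Pi.single a 1)

noncomputable def rightBlock (c : Fin (m + 3)) : Matrix (Fin (m + 3)) (Fin (m + 3)) ℂ :=
  if c = 1 then shift m else 1

noncomputable def blockBasis (o : Option (Fin (m + 3))) : Matrix (Fin (m + 3)) (Fin (m + 3)) ℂ :=
  Option.casesOn' o (shift m) (leftBlock m)

theorem fin_one_add_one_ne_zero : (1 : Fin (m + 3)) + 1 ≠ 0 := by
  simp [Fin.ext_iff, Fin.val_add, Nat.mod_eq_of_lt (show 2 < m + 3 by omega)]

theorem shift_mem_unitaryGroup : shift m ∈ unitaryGroup (Fin (m + 3)) ℂ :=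
  permMatrix_mem_unitary _

theorem shift_apply (i k : Fin (m + 3)) : shift m i k = if i + 1 = k then 1 else 0 := by
  simp [shift, PEquiv.toMatrix_apply, finRotate_apply]

theorem leftBlock_apply (a i k : Fin (m + 3)) :
    leftBlock m a i k = if a = 1 then (if k + 1 = i then 1 else 0)
      else if i = k then (if a ≠ 0 ∧ i = a then -1 else 1) else 0 := by
  unfold leftBlock
  split_ifs <;> simp_all [one_apply, star_apply, shift_apply, householder_apply, Pi.single_apply]
  all_goals grind

theorem blockBasis_apply_zero_one (o : Option (Fin (m + 3))) :
    blockBasis m o 0 1 = if o = none then 1 else 0 := by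
  rcases o with _ | a
  · simp [blockBasis, shift_apply]
  · simp [blockBasis, leftBlock_apply, fin_one_add_one_ne_zero]

theorem blockBasis_apply_one_zero (o : Option (Fin (m + 3))) :
    blockBasis m o 1 0 = if o = some 1 then 1 else 0 := by
  rcases o with _ | a
  · simp [blockBasis, shift_apply, fin_one_add_one_ne_zero]
  · simp [blockBasis, leftBlock_apply]

theorem blockBasis_apply_diag (o : Option (Fin (m + 3))) {k : Fin (m + 3)} (hk0 : k ≠ 0)
    (hk1 : k ≠ 1) :
    blockBasis m o k k = blockBasis m o 0 0 - 2 * if o = some k then 1 else 0 := by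
  rcases o with _ | a
  · simp only [blockBasis, Option.casesOn'_none, shift_apply]
    simp
  · simp only [blockBasis, Option.casesOn'_some, leftBlock_apply, Option.some.injEq]
    split_ifs <;> grind

theorem linearIndependent_blockBasis : LinearIndependent ℂ (blockBasis m) := by
  rw [Fintype.linearIndependent_iff]
  intro g hg
  have entry : ∀ i k, ∑ o, g o * blockBasis m o i k = 0 := fun i k => by
    simpa [Matrix.sum_apply] using congrFun (congrFun hg i) k
  have h01 : g none = 0 := by simpa [blockBasis_apply_zero_one] using entry 0 1
  have h10 : g (some 1) = 0 := by simpa [blockBasis_apply_one_zero] using entry 1 0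
  have hdiag : ∀ k, k ≠ 0 → k ≠ 1 → g (some k) = 0 := by
    intro k hk0 hk1
    have h := entry k k
    simp only [blockBasis_apply_diag m _ hk0 hk1, mul_sub, Finset.sum_sub_distrib, entry 0 0] at h
    simpa using h
  have hrest : ∀ o, o ≠ some 0 → g o = 0 := by
    rintro (_ | k) hk
    · exact h01
    · obtain rfl | hk1 := eq_or_ne k 1
      · exact h10
      · exact hdiag k (by simpa using hk) hk1
  have h0 : g (some 0) = 0 := by
    have h := entry 0 0
    rw [Fintype.sum_eq_single (some 0) fun o ho => by rw [hrest o ho, zero_mul]] at h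
    simpa [blockBasis, leftBlock_apply] using h
  intro o
  obtain rfl | ho := eq_or_ne o (some 0)
  · exact h0
  · exact hrest o ho

theorem mixer_mem_unitaryGroup : mixer m ∈ unitaryGroup (Fin (m + 3)) ℂ := by
  refine householder_mem_unitary ?_
  rw [dotProduct, Fintype.sum_eq_add 0 1 (by simp) fun x hx => by simp [hx.1, hx.2]]
  norm_num

theorem mixer_apply_of_ne {a c : Fin (m + 3)} (h : a ≠ 0 ∧ a ≠ 1 ∨ c ≠ 0 ∧ c ≠ 1) :
    mixer m a c = (1 : Matrix (Fin (m + 3)) (Fin (m + 3)) ℂ) a c := by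
  rcases h with ⟨h0, h1⟩ | ⟨h0, h1⟩ <;> simp [mixer, householder_apply, one_apply, h0, h1]

theorem mixer_entries_ne_zero : mixer m 0 0 ≠ 0 ∧ mixer m 0 1 ≠ 0 ∧ mixer m 1 0 ≠ 0 := by
  simp [mixer, householder_apply]
  norm_num

theorem image_support_mixer_eq_range_blockBasis :
    (fun p : Fin (m + 3) × Fin (m + 3) => leftBlock m p.1 * rightBlock m p.2) ''
      {p | mixer m p.1 p.2 ≠ 0} = range (blockBasis m) := by
  ext M
  constructor
  · rintro ⟨⟨a, c⟩, hac, rfl⟩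
    by_cases hsmall : (a = 0 ∨ a = 1) ∧ (c = 0 ∨ c = 1)
    · have hunit := Unitary.star_mul_self_of_mem (shift_mem_unitaryGroup m)
      obtain ⟨rfl | rfl, rfl | rfl⟩ := hsmall
      · exact ⟨some 0, by simp [blockBasis, leftBlock, rightBlock]⟩
      · exact ⟨none, by simp [blockBasis, leftBlock, rightBlock]⟩
      · exact ⟨some 1, by simp [blockBasis, leftBlock, rightBlock]⟩
      · exact ⟨some 0, by simp [blockBasis, leftBlock, rightBlock, hunit]⟩
    · have hlarge : a ≠ 0 ∧ a ≠ 1 ∨ c ≠ 0 ∧ c ≠ 1 := by tauto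
      obtain rfl : a = c := by
        simpa [mixer_apply_of_ne m hlarge, one_apply] using hac
      have ha : a ≠ 0 ∧ a ≠ 1 := by tauto
      exact ⟨some a, by simp [blockBasis, leftBlock, rightBlock, ha.1, ha.2]⟩
  · rintro ⟨o, rfl⟩
    obtain ⟨h00, h01, h10⟩ := mixer_entries_ne_zero m
    rcases o with _ | a
    · exact ⟨(0, 1), h01, by simp [blockBasis, leftBlock, rightBlock]⟩
    obtain rfl | ha0 := eq_or_ne a 0
    · exact ⟨(0, 0), h00, by simp [blockBasis, leftBlock, rightBlock]⟩
    obtain rfl | ha1 := eq_or_ne a 1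
    · exact ⟨(1, 0), h10, by simp [blockBasis, leftBlock, rightBlock]⟩
    refine ⟨(a, a), ?_, by simp [blockBasis, leftBlock, rightBlock, ha0, ha1]⟩
    simp [mixer_apply_of_ne m (.inl ⟨ha0, ha1⟩)]

theorem leftBlock_mem_unitaryGroup (a : Fin (m + 3)) :
    leftBlock m a ∈ unitaryGroup (Fin (m + 3)) ℂ := by
  unfold leftBlock
  split_ifs
  · exact one_mem _
  · exact Unitary.star_mem (shift_mem_unitaryGroup m)
  · exact householder_mem_unitary (by simp [dotProduct, Pi.single_apply])

theorem rightBlock_mem_unitaryGroup (c : Fin (m + 3)) :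
    rightBlock m c ∈ unitaryGroup (Fin (m + 3)) ℂ := by
  unfold rightBlock
  split_ifs
  · exact shift_mem_unitaryGroup m
  · exact one_mem _

theorem exists_unitary_osr_eq :
    ∃ U ∈ unitaryGroup (Fin (m + 3) × Fin (m + 3)) ℂ, osr U = m + 3 + 1 := by
  refine ⟨controlledSandwich (leftBlock m) (mixer m) (rightBlock m),
    controlledSandwich_mem_unitaryGroup (leftBlock_mem_unitaryGroup m) (mixer_mem_unitaryGroup m)
      (rightBlock_mem_unitaryGroup m), ?_⟩
  rw [osr_controlledSandwich, image_support_mixer_eq_range_blockBasis,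
    finrank_span_eq_card (linearIndependent_blockBasis m)]
  simp

end SchmidtRankWitness

theorem stmt15_general (n : ℕ) (hn : 2 < n) :
    ∃ U ∈ Matrix.unitaryGroup (Fin n × Fin n) ℂ, osr U = n + 1 := by
  obtain ⟨m, rfl⟩ : ∃ m, n = m + 3 := ⟨n - 3, by omega⟩
  exact SchmidtRankWitness.exists_unitary_osr_eq m

/-- For every even `n > 2` there is a unitary on `ℂ^n ⊗ ℂ^n` with operator
Schmidt rank `n + 1`. -/
theorem stmt15 (n : ℕ) (heven : Even n) (hn : 2 < n) :
    ∃ U ∈ Matrix.unitaryGroup (Fin n × Fin n) ℂ, osr U = n + 1 :=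
  stmt15_general n hn
end

section
/- For every n > 2, there exists a unitary D ∈ U(ℂ^n ⊗ ℂ^n) with operator Schmidt rank Ω(D) = n² - 1. -/
/-!
For any `Y`, realigning `Y * SWAP` gives the partial transpose `Y^Γ` of `Y` (transpose in the
second factor) with its columns permuted, so `Ω(Y * SWAP) = rank Y^Γ`. Take for `Y` the product
of two Givens rotations in disjoint planes: one by a generic angle in the plane of
`e₀ ⊗ e₀, e₁ ⊗ e₂`, and one by `π/2` in the plane of `e₀ ⊗ e₁, e₁ ⊗ e₀`. The partial transpose
moves the off-diagonal entries of the second rotation off row and column `e₀ ⊗ e₁`, while its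
diagonal entry there is `cos (π/2) = 0`, so `Y^Γ` kills `e₀ ⊗ e₁`. On the other basis vectors
`Y^Γ` is the identity except for two invertible `2 × 2` blocks and one nonzero diagonal entry,
so its kernel is exactly the line through `e₀ ⊗ e₁`.
-/

open Matrix Kronecker

namespace Matrix

section PartialTranspose

variable {α β R : Type*}

def partialTranspose (M : Matrix (α × β) (α × β) R) : Matrix (α × β) (α × β) R :=
  of fun x y => M (x.1, y.2) (y.1, x.2)

@[simp]
lemma partialTranspose_apply (M : Matrix (α × β) (α × β) R) (x y : α × β) :
    partialTranspose M x y = M (x.1, y.2) (y.1, x.2) := rfl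

lemma partialTranspose_add [Add R] (M N : Matrix (α × β) (α × β) R) :
    partialTranspose (M + N) = partialTranspose M + partialTranspose N := rfl

lemma partialTranspose_sub [Sub R] (M N : Matrix (α × β) (α × β) R) :
    partialTranspose (M - N) = partialTranspose M - partialTranspose N := rfl

lemma partialTranspose_smul {S : Type*} [SMul S R] (r : S) (M : Matrix (α × β) (α × β) R) :
    partialTranspose (r • M) = r • partialTranspose M := rfl

variable [DecidableEq α] [DecidableEq β]

lemma partialTranspose_one [Zero R] [One R] :
    partialTranspose (1 : Matrix (α × β) (α × β) R) = 1 := by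
  ext x y
  simp only [partialTranspose_apply, one_apply, Prod.ext_iff]
  grind

lemma partialTranspose_single [Zero R] (a c : α) (b d : β) (r : R) :
    partialTranspose (single (a, b) (c, d) r) = single (a, d) (c, b) r := by
  ext x y
  simp only [partialTranspose_apply, single_apply, Prod.ext_iff]
  grind

end PartialTranspose

section Givens

variable {κ : Type*} [DecidableEq κ]

noncomputable def givensRotation (i j : κ) (c s : ℝ) : Matrix κ κ ℂ :=
  1 + ((c : ℂ) - 1) • (single i i 1 + single j j 1) + (s : ℂ) • (single j i 1 - single i j 1)

lemma givensRotation_mem_unitaryGroup [Fintype κ] {i j : κ} (hij : i ≠ j) {c s : ℝ}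
    (h : c ^ 2 + s ^ 2 = 1) : givensRotation i j c s ∈ unitaryGroup κ ℂ := by
  set D : Matrix κ κ ℂ := single i i 1 + single j j 1
  set A : Matrix κ κ ℂ := single j i 1 - single i j 1
  have hDD : D * D = D := by
    simp only [D, add_mul, mul_add, single_mul_single_same, single_mul_single_of_ne, ne_eq, hij,
      hij.symm, not_false_eq_true, mul_one, add_zero, zero_add]
  have hDA : D * A = A := by
    simp only [D, A, add_mul, mul_sub, single_mul_single_same, single_mul_single_of_ne, ne_eq, hij,
      hij.symm, not_false_eq_true, mul_one]
    abel
  have hAD : A * D = A := by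
    simp only [D, A, sub_mul, mul_add, single_mul_single_same, single_mul_single_of_ne, ne_eq, hij,
      hij.symm, not_false_eq_true, mul_one, sub_zero, zero_sub]
    abel
  have hAA : A * A = -D := by
    simp only [D, A, sub_mul, mul_sub, single_mul_single_same, single_mul_single_of_ne, ne_eq, hij,
      hij.symm, not_false_eq_true, mul_one, sub_zero, zero_sub]
    abel
  have hstar : star (givensRotation i j c s) = 1 + ((c : ℂ) - 1) • D - (s : ℂ) • A := by
    simp only [givensRotation, star_add, star_one, star_smul, star_sub, star_eq_conjTranspose,
      conjTranspose_single, RCLike.star_def, Complex.conj_ofReal, D, A]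
    module
  have hc : (c : ℂ) ^ 2 + (s : ℂ) ^ 2 = 1 := by exact_mod_cast h
  rw [mem_unitaryGroup_iff, hstar]
  change (1 + ((c : ℂ) - 1) • D + (s : ℂ) • A) * _ = 1
  simp only [add_mul, mul_add, mul_sub, one_mul, mul_one, smul_mul_assoc, mul_smul_comm,
    hDD, hDA, hAD, hAA]
  linear_combination (norm := module) hc • D

lemma givensRotation_mul_givensRotation [Fintype κ] {i j k l : κ} (hik : i ≠ k) (hil : i ≠ l)
    (hjk : j ≠ k) (hjl : j ≠ l) (c s c' s' : ℝ) :
    givensRotation i j c s * givensRotation k l c' s' =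
      givensRotation i j c s + givensRotation k l c' s' - 1 := by
  simp only [givensRotation, add_mul, mul_add, sub_mul, mul_sub, one_mul, mul_one,
    smul_mul_assoc, mul_smul_comm, single_mul_single_of_ne, ne_eq, hik, hil, hjk, hjl,
    not_false_eq_true, smul_zero, sub_self, add_zero]
  abel

lemma partialTranspose_givensRotation {α β : Type*} [DecidableEq α] [DecidableEq β]
    (a c : α) (b d : β) (co si : ℝ) :
    partialTranspose (givensRotation (a, b) (c, d) co si) =
      1 + ((co : ℂ) - 1) • (single (a, b) (a, b) 1 + single (c, d) (c, d) 1) +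
        (si : ℂ) • (single (c, b) (a, d) 1 - single (a, d) (c, b) 1) := by
  simp only [givensRotation, partialTranspose_add, partialTranspose_sub, partialTranspose_smul,
    partialTranspose_one, partialTranspose_single]

end Givens

lemma rank_eq_card_sub_one_of_ker_eq_span_singleton {m n K : Type*} [Fintype n] [Field K]
    {M : Matrix m n K} {v : n → K} (hv : v ≠ 0)
    (hker : LinearMap.ker M.mulVecLin = Submodule.span K {v}) :
    M.rank = Fintype.card n - 1 := by
  have h := LinearMap.finrank_range_add_finrank_ker M.mulVecLin
  rw [hker, finrank_span_singleton hv, Module.finrank_fintype_fun_eq_card] at h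
  rw [rank]
  omega

abbrev swapMatrix (α : Type*) [DecidableEq α] : Matrix (α × α) (α × α) ℂ :=
  Equiv.Perm.permMatrix ℂ (Equiv.prodComm α α)

lemma swapMatrix_mem_unitaryGroup (α : Type*) [Fintype α] [DecidableEq α] :
    swapMatrix α ∈ unitaryGroup (α × α) ℂ := by
  rw [mem_unitaryGroup_iff, star_eq_conjTranspose, conjTranspose_permMatrix, ← permMatrix_mul,
    inv_mul_cancel, permMatrix_one]

end Matrix

lemma realign_mul_swapMatrix {n : ℕ} (Y : Matrix (Fin n × Fin n) (Fin n × Fin n) ℂ) :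
    realign (Y * swapMatrix (Fin n)) = (partialTranspose Y).submatrix id Prod.swap := by
  ext p q
  simp [realign, PEquiv.mul_toMatrix_toPEquiv]

lemma osr_mul_swapMatrix {n : ℕ} (Y : Matrix (Fin n × Fin n) (Fin n × Fin n) ℂ) :
    osr (Y * swapMatrix (Fin n)) = (partialTranspose Y).rank := by
  rw [osr, realign_mul_swapMatrix]
  exact rank_submatrix _ (Equiv.refl _) (Equiv.prodComm _ _)

section TwoRotations

variable {ι : Type*} [Fintype ι] [DecidableEq ι] {i j k : ι}

lemma ker_partialTranspose_givensRotation_mul_givensRotation (hij : i ≠ j) (hik : i ≠ k)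
    (hjk : j ≠ k) {c s : ℝ} (hc : c ≠ 0) (hc' : c ≠ -1) (hs : s ≠ 0) :
    LinearMap.ker (partialTranspose
      (givensRotation (i, i) (j, k) c s * givensRotation (i, j) (j, i) 0 1)).mulVecLin =
      Submodule.span ℂ {Pi.single (i, j) 1} := by
  rw [givensRotation_mul_givensRotation (by simp [hij]) (by simp [hij]) (by simp [hij.symm])
    (by simp [hik.symm]), partialTranspose_sub, partialTranspose_add,
    partialTranspose_givensRotation, partialTranspose_givensRotation, partialTranspose_one]
  ext v
  simp only [LinearMap.mem_ker, mulVecLin_apply, Submodule.mem_span_singleton, add_mulVec,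
    sub_mulVec, smul_mulVec, one_mulVec, single_mulVec_eq, smul_add, smul_sub, smul_smul]
  have hc₀ : (c : ℂ) ≠ 0 := by exact_mod_cast hc
  have hc₁ : (c : ℂ) + 1 ≠ 0 := by exact_mod_cast mt eq_neg_of_add_eq_zero_left hc'
  have hs₀ : (s : ℂ) ≠ 0 := by exact_mod_cast hs
  constructor
  · intro h
    have eii := congrFun h (i, i)
    have ejj := congrFun h (j, j)
    have ejk := congrFun h (j, k)
    have eji := congrFun h (j, i)
    have eik := congrFun h (i, k)
    simp only [Pi.add_apply, Pi.sub_apply, Pi.smul_apply, Pi.zero_apply, Pi.single_apply,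
      Prod.mk.injEq, hij, hik, hjk, hij.symm, hik.symm, hjk.symm, and_self, and_true, and_false,
      ite_true, ite_false, smul_eq_mul, mul_one, mul_zero, Complex.ofReal_zero,
      Complex.ofReal_one] at eii ejj ejk eji eik
    have hii : v (i, i) = 0 :=
      eq_zero_of_ne_zero_of_mul_left_eq_zero hc₁ (by linear_combination eii + ejj)
    have hjj : v (j, j) = 0 := by linear_combination ejj - hii
    have hjk' : v (j, k) = 0 :=
      eq_zero_of_ne_zero_of_mul_left_eq_zero hc₀ (by linear_combination ejk)
    have hik' : v (i, k) = 0 :=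
      eq_zero_of_ne_zero_of_mul_left_eq_zero hs₀ (by linear_combination eji)
    have hji : v (j, i) = 0 :=
      eq_zero_of_ne_zero_of_mul_left_eq_zero hs₀ (by linear_combination -eik + hik')
    refine ⟨v (i, j), ?_⟩
    rw [hii, hjj, hjk', hik', hji] at h
    linear_combination (norm := module) (-1 : ℂ) • h
  · rintro ⟨a, rfl⟩
    simp [hij, hij.symm, hjk.symm]

lemma rank_partialTranspose_givensRotation_mul_givensRotation (hij : i ≠ j) (hik : i ≠ k)
    (hjk : j ≠ k) {c s : ℝ} (hc : c ≠ 0) (hc' : c ≠ -1) (hs : s ≠ 0) :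
    (partialTranspose
      (givensRotation (i, i) (j, k) c s * givensRotation (i, j) (j, i) 0 1)).rank =
      Fintype.card ι ^ 2 - 1 := by
  rw [rank_eq_card_sub_one_of_ker_eq_span_singleton (by simp)
    (ker_partialTranspose_givensRotation_mul_givensRotation hij hik hjk hc hc' hs),
    Fintype.card_prod, sq]

end TwoRotations

/-- For every `n > 2` there is a unitary on `ℂ^n ⊗ ℂ^n` with operator Schmidt
rank `n² - 1`. -/
theorem stmt17 (n : ℕ) (hn : 2 < n) :
    ∃ D ∈ Matrix.unitaryGroup (Fin n × Fin n) ℂ, osr D = n ^ 2 - 1 := by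
  let i : Fin n := ⟨0, by omega⟩
  let j : Fin n := ⟨1, by omega⟩
  let k : Fin n := ⟨2, by omega⟩
  have hij : i ≠ j := by simp [i, j, Fin.ext_iff]
  have hik : i ≠ k := by simp [i, k, Fin.ext_iff]
  have hjk : j ≠ k := by simp [j, k, Fin.ext_iff]
  refine ⟨givensRotation (i, i) (j, k) (3 / 5) (4 / 5) * givensRotation (i, j) (j, i) 0 1 *
    swapMatrix (Fin n), ?_, ?_⟩
  · refine mul_mem (mul_mem ?_ ?_) (swapMatrix_mem_unitaryGroup _) <;>
      exact givensRotation_mem_unitaryGroup (by simp [hij]) (by norm_num)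
  · rw [osr_mul_swapMatrix, rank_partialTranspose_givensRotation_mul_givensRotation hij hik hjk
      (by norm_num) (by norm_num) (by norm_num), Fintype.card_fin]
end
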